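/- Define g₂(r) = (9/2)r + log(1−r) − r/(2(1+r)) + r/(1−r) − r²/(1+r)² for r ∈ [0,1). Then g₂′(r) = (8 + 8r − 3r² − 17r³ + 11r⁴ + 9r⁵)/(2(1−r)²(1+r)³) ≥ 0 (the polynomial 8 + 8r − 3r² − 17r³ + 11r⁴ + 9r⁵ has no positive real root), so g₂ is monotonically increasing on [0,1) and g₂(r) ≥ g₂(0) = 0 for all r ∈ [0,1). -/

import Mathlib

open Set

/-- `g₂(r) = (9/2)r + log(1-r) - r/(2(1+r)) + r/(1-r) - r²/(1+r)²`. -/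
noncomputable def g₂ (r : ℝ) : ℝ :=
  (9/2) * r + Real.log (1 - r) - r / (2 * (1 + r)) + r / (1 - r) - r ^ 2 / (1 + r) ^ 2

lemma poly_pos (x : ℝ) (hx : 0 < x) :
    0 < 8 + 8 * x - 3 * x ^ 2 - 17 * x ^ 3 + 11 * x ^ 4 + 9 * x ^ 5 := by
  nlinarith [sq_nonneg (x - 1), sq_nonneg (x^2 - 1), sq_nonneg (x^2 - x), sq_nonneg x,
    sq_nonneg (x - 1/2), mul_pos hx hx, sq_nonneg (x^2 - 2*x + 1), pow_pos hx 3,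
    mul_nonneg (mul_nonneg hx.le hx.le) (sq_nonneg (x - 1)),
    mul_nonneg hx.le (sq_nonneg (x^2 - 1)), mul_nonneg hx.le (sq_nonneg (x - 1))]

lemma hderiv (r : ℝ) (h1 : -1 < r) (h2 : r < 1) :
    HasDerivAt g₂ ((8 + 8 * r - 3 * r ^ 2 - 17 * r ^ 3 + 11 * r ^ 4 + 9 * r ^ 5) /
      (2 * (1 - r) ^ 2 * (1 + r) ^ 3)) r := by
  have hp : (0:ℝ) < 1 + r := by linarith
  have hm : (0:ℝ) < 1 - r := by linarith
  have hp' : (1:ℝ) + r ≠ 0 := ne_of_gt hp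
  have hm' : (1:ℝ) - r ≠ 0 := ne_of_gt hm
  have A : HasDerivAt (fun r : ℝ => (9/2) * r) (9/2) r := by
    simpa using (hasDerivAt_id r).const_mul (9/2 : ℝ)
  have hlin : HasDerivAt (fun r : ℝ => 1 - r) (-1) r := by
    simpa using (hasDerivAt_id r).const_sub 1
  have B : HasDerivAt (fun r : ℝ => Real.log (1 - r)) (-1 / (1 - r)) r := hlin.log hm'
  have hden1 : HasDerivAt (fun r : ℝ => 2 * (1 + r)) 2 r := by
    simpa using ((hasDerivAt_id r).const_add 1).const_mul (2:ℝ)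
  have C : HasDerivAt (fun r : ℝ => r / (2 * (1 + r)))
      ((1 * (2 * (1 + r)) - r * 2) / (2 * (1 + r)) ^ 2) r :=
    (hasDerivAt_id r).div hden1 (by positivity)
  have D : HasDerivAt (fun r : ℝ => r / (1 - r))
      ((1 * (1 - r) - r * (-1)) / (1 - r) ^ 2) r :=
    (hasDerivAt_id r).div hlin (by positivity)
  have hnum : HasDerivAt (fun r : ℝ => r ^ 2) (2 * r) r := by
    simpa using hasDerivAt_pow 2 r
  have hden2 : HasDerivAt (fun r : ℝ => (1 + r) ^ 2) (2 * (1 + r)) r := by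
    have := ((hasDerivAt_id r).const_add 1).pow 2
    simpa [Pi.pow_def] using this
  have E : HasDerivAt (fun r : ℝ => r ^ 2 / (1 + r) ^ 2)
      ((2 * r * (1 + r) ^ 2 - r ^ 2 * (2 * (1 + r))) / ((1 + r) ^ 2) ^ 2) r :=
    hnum.div hden2 (by positivity)
  have H := (((A.add B).sub C).add D).sub E
  refine H.congr_deriv ?_
  field_simp
  ring

theorem stmt13 :
    (∀ x : ℝ, 0 < x → 8 + 8 * x - 3 * x ^ 2 - 17 * x ^ 3 + 11 * x ^ 4 + 9 * x ^ 5 ≠ 0) ∧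
    (∀ r ∈ Ico (0:ℝ) 1,
        deriv g₂ r = (8 + 8 * r - 3 * r ^ 2 - 17 * r ^ 3 + 11 * r ^ 4 + 9 * r ^ 5) /
          (2 * (1 - r) ^ 2 * (1 + r) ^ 3) ∧ 0 ≤ deriv g₂ r) ∧
    MonotoneOn g₂ (Ico (0:ℝ) 1) ∧
    g₂ 0 = 0 ∧
    ∀ r ∈ Ico (0:ℝ) 1, 0 ≤ g₂ r := by
  have hderiv_eq : ∀ r ∈ Ico (0:ℝ) 1, deriv g₂ r =
      (8 + 8 * r - 3 * r ^ 2 - 17 * r ^ 3 + 11 * r ^ 4 + 9 * r ^ 5) /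
        (2 * (1 - r) ^ 2 * (1 + r) ^ 3) := fun r hr =>
    (hderiv r (by linarith [hr.1]) hr.2).deriv
  have hnonneg : ∀ r ∈ Ico (0:ℝ) 1, 0 ≤ deriv g₂ r := by
    intro r hr
    rw [hderiv_eq r hr]
    apply div_nonneg
    · rcases eq_or_lt_of_le hr.1 with h | h
      · subst h; norm_num
      · exact (poly_pos r h).le
    · have h1 : (0:ℝ) < 1 - r := by linarith [hr.2]
      have h2 : (0:ℝ) < 1 + r := by linarith [hr.1]
      positivity
  have hmono : MonotoneOn g₂ (Ico (0:ℝ) 1) := by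
    apply monotoneOn_of_deriv_nonneg (convex_Ico 0 1)
    · intro r hr
      exact (hderiv r (by linarith [hr.1]) hr.2).continuousAt.continuousWithinAt
    · intro r hr
      rw [interior_Ico] at hr
      exact (hderiv r (by linarith [hr.1]) hr.2).differentiableAt.differentiableWithinAt
    · intro r hr
      rw [interior_Ico] at hr
      exact hnonneg r ⟨hr.1.le, hr.2⟩
  have h0 : g₂ 0 = 0 := by simp [g₂]
  refine ⟨fun x hx => ne_of_gt (poly_pos x hx), fun r hr => ⟨hderiv_eq r hr, hnonneg r hr⟩,
    hmono, h0, fun r hr => ?_⟩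
  have := hmono ⟨le_refl 0, by norm_num⟩ hr hr.1
  rwa [h0] at this
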